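/- arXiv:1906.08583 — 6 statements merged into one kernel-verified Lean document; each statement's English description precedes it below -/
import Mathlib

section
/- Suppose Θ = 0, 𝒜 = 0 and Q = 0 identically on U. Then the algebraic constraint (3/2)Σ² + (1/2)(ρ + 3p) = 0 holds at every point of U; in particular ρ + 3p = −3Σ² ≤ 0 on U, so the strong energy condition ρ + 3p ≥ 0 fails wherever Σ ≠ 0. -/
/-- Partial derivative of a scalar field on `ℝ²` in the `t` (first-coordinate) direction. -/
noncomputable def pdt (f : ℝ × ℝ → ℝ) (x : ℝ × ℝ) : ℝ := fderiv ℝ f x (1, 0)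

/-- Partial derivative of a scalar field on `ℝ²` in the `χ` (second-coordinate) direction. -/
noncomputable def pdchi (f : ℝ × ℝ → ℝ) (x : ℝ × ℝ) : ℝ := fderiv ℝ f x (0, 1)

/-- Dot derivative `ψ̇ = (1/A) ∂ψ/∂t` relative to the metric function `A`. -/
noncomputable def dotd (A f : ℝ × ℝ → ℝ) (x : ℝ × ℝ) : ℝ := (1 / A x) * pdt f x

/-- Hat derivative `ψ̂ = (1/B) ∂ψ/∂χ` relative to the metric function `B`. -/
noncomputable def hatd (B f : ℝ × ℝ → ℝ) (x : ℝ × ℝ) : ℝ := (1 / B x) * pdchi f x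

/-- The 1+1+2 covariant description of an LRS II spacetime on an open connected
domain `U ⊆ ℝ²` with coordinates `(t, χ)`: metric functions `A, B > 0`, the covariant
scalars (acceleration `accel = 𝒜`, expansion `Theta = Θ`, sheet expansion `phi = φ`,
shear `Sigma = Σ`, electric Weyl `curlyE = ℰ`, energy density `rho = ρ`, pressure `p`,
anisotropic stress `Pi = Π`, heat flux `Q`), all smooth on `U`, together with the
compatibility conditions and the LRS II field equations. -/
structure LRSII where
  U : Set (ℝ × ℝ)
  hUopen : IsOpen U
  hUnonempty : U.Nonempty
  hUconn : IsConnected U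
  A : ℝ × ℝ → ℝ
  B : ℝ × ℝ → ℝ
  accel : ℝ × ℝ → ℝ
  Theta : ℝ × ℝ → ℝ
  phi : ℝ × ℝ → ℝ
  Sigma : ℝ × ℝ → ℝ
  curlyE : ℝ × ℝ → ℝ
  rho : ℝ × ℝ → ℝ
  p : ℝ × ℝ → ℝ
  Pi : ℝ × ℝ → ℝ
  Q : ℝ × ℝ → ℝ
  hApos : ∀ x ∈ U, 0 < A x
  hBpos : ∀ x ∈ U, 0 < B x
  hAsmooth : ContDiffOn ℝ (⊤ : ℕ∞) A U
  hBsmooth : ContDiffOn ℝ (⊤ : ℕ∞) B U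
  haccel : ContDiffOn ℝ (⊤ : ℕ∞) accel U
  hTheta : ContDiffOn ℝ (⊤ : ℕ∞) Theta U
  hphi : ContDiffOn ℝ (⊤ : ℕ∞) phi U
  hSigma : ContDiffOn ℝ (⊤ : ℕ∞) Sigma U
  hcurlyE : ContDiffOn ℝ (⊤ : ℕ∞) curlyE U
  hrho : ContDiffOn ℝ (⊤ : ℕ∞) rho U
  hp : ContDiffOn ℝ (⊤ : ℕ∞) p U
  hPi : ContDiffOn ℝ (⊤ : ℕ∞) Pi U
  hQ : ContDiffOn ℝ (⊤ : ℕ∞) Q U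
  /-- `𝒜 = (∂A/∂χ)/(AB)` -/
  compat1 : ∀ x ∈ U, accel x = pdchi A x / (A x * B x)
  /-- `Θ/3 + Σ = (∂B/∂t)/(AB)` -/
  compat2 : ∀ x ∈ U, Theta x / 3 + Sigma x = pdt B x / (A x * B x)
  /-- (E1) -/
  E1 : ∀ x ∈ U, (2 / 3) * dotd A Theta x - dotd A Sigma x =
      accel x * phi x - 2 * (Theta x / 3 - Sigma x / 2) ^ 2
        - (1 / 3) * (rho x + 3 * p x) + curlyE x - Pi x / 2
  /-- (E2) -/
  E2 : ∀ x ∈ U, dotd A phi x =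
      (2 * Theta x / 3 - Sigma x) * (accel x - phi x / 2) + Q x
  /-- (E3) -/
  E3 : ∀ x ∈ U, dotd A curlyE x - dotd A rho x / 3 + dotd A Pi x / 2 =
      -(3 / 2) * (2 * Theta x / 3 - Sigma x) * curlyE x
        - (1 / 4) * (2 * Theta x / 3 - Sigma x) * Pi x
        + (1 / 2) * phi x * Q x
        + (1 / 2) * (rho x + p x) * (2 * Theta x / 3 - Sigma x)
  /-- (P1) -/
  P1 : ∀ x ∈ U, (2 / 3) * hatd B Theta x - hatd B Sigma x =
      (3 / 2) * phi x * Sigma x + Q x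
  /-- (P2) -/
  P2 : ∀ x ∈ U, hatd B phi x =
      (Theta x / 3 + Sigma x) * (2 * Theta x / 3 - Sigma x)
        - phi x ^ 2 / 2 - (2 / 3) * rho x - curlyE x - Pi x / 2
  /-- (P3) -/
  P3 : ∀ x ∈ U, hatd B curlyE x - hatd B rho x / 3 + hatd B Pi x / 2 =
      -(3 / 2) * phi x * (curlyE x + Pi x / 2)
        - (1 / 2) * (2 * Theta x / 3 - Sigma x) * Q x
  /-- (M1) -/
  M1 : ∀ x ∈ U, hatd B accel x - dotd A Theta x =
      -(accel x + phi x) * accel x + Theta x ^ 2 / 3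
        + (3 / 2) * Sigma x ^ 2 + (1 / 2) * (rho x + 3 * p x)
  /-- (M2) -/
  M2 : ∀ x ∈ U, hatd B Q x + dotd A rho x =
      -Theta x * (rho x + p x) - (phi x + 2 * accel x) * Q x
        - (3 / 2) * Sigma x * Pi x
  /-- (M3) -/
  M3 : ∀ x ∈ U, hatd B p x + hatd B Pi x + dotd A Q x =
      -((3 / 2) * phi x + accel x) * Pi x - (4 * Theta x / 3 + Sigma x) * Q x
        - (rho x + p x) * accel x

lemma fderiv_zero_of_eqOn_zero {U : Set (ℝ × ℝ)} (hU : IsOpen U) {f : ℝ × ℝ → ℝ}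
    (hf : ∀ x ∈ U, f x = 0) {x : ℝ × ℝ} (hx : x ∈ U) (v : ℝ × ℝ) :
    fderiv ℝ f x v = 0 := by
  have h : f =ᶠ[nhds x] (fun _ => (0:ℝ)) :=
    Filter.eventuallyEq_of_mem (hU.mem_nhds hx) hf
  rw [h.fderiv_eq, fderiv_fun_const]
  simp

theorem stmt_0 (S : LRSII)
    (hTheta : ∀ x ∈ S.U, S.Theta x = 0)
    (haccel : ∀ x ∈ S.U, S.accel x = 0)
    (hQ : ∀ x ∈ S.U, S.Q x = 0) :
    ∀ x ∈ S.U, (3 / 2) * S.Sigma x ^ 2 + (1 / 2) * (S.rho x + 3 * S.p x) = 0 ∧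
      S.rho x + 3 * S.p x = -3 * S.Sigma x ^ 2 ∧ S.rho x + 3 * S.p x ≤ 0 ∧
      (S.Sigma x ≠ 0 → ¬ (S.rho x + 3 * S.p x ≥ 0)) := by
  intro x hx
  have hM1 := S.M1 x hx
  have h1 : hatd S.B S.accel x = 0 := by
    simp [hatd, pdchi, fderiv_zero_of_eqOn_zero S.hUopen haccel hx]
  have h2 : dotd S.A S.Theta x = 0 := by
    simp [dotd, pdt, fderiv_zero_of_eqOn_zero S.hUopen hTheta hx]
  rw [h1, h2, haccel x hx, hTheta x hx] at hM1
  have key : (3 / 2) * S.Sigma x ^ 2 + (1 / 2) * (S.rho x + 3 * S.p x) = 0 := by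
    linarith
  refine ⟨key, by linarith, by nlinarith [sq_nonneg (S.Sigma x)], ?_⟩
  intro hS hge
  have : S.Sigma x ^ 2 > 0 := by positivity
  nlinarith
end

section
/- Suppose Θ = 0, 𝒜 = 0, Q = 0 and Π = 0 identically on U. Then the evolution of the pressure is given by ṗ = (Σ² + 2ℰ)·Σ at every point of U. -/
lemma pdt_zero_of_eq_zero {U : Set (ℝ × ℝ)} (hU : IsOpen U) {f : ℝ × ℝ → ℝ}
    (hf : ∀ y ∈ U, f y = 0) {x : ℝ × ℝ} (hx : x ∈ U) : pdt f x = 0 := by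
  have h : f =ᶠ[nhds x] (fun _ => (0:ℝ)) :=
    Filter.eventuallyEq_of_mem (hU.mem_nhds hx) hf
  unfold pdt
  rw [h.fderiv_eq, fderiv_fun_const]
  simp

lemma pdchi_zero_of_eq_zero {U : Set (ℝ × ℝ)} (hU : IsOpen U) {f : ℝ × ℝ → ℝ}
    (hf : ∀ y ∈ U, f y = 0) {x : ℝ × ℝ} (hx : x ∈ U) : pdchi f x = 0 := by
  have h : f =ᶠ[nhds x] (fun _ => (0:ℝ)) :=
    Filter.eventuallyEq_of_mem (hU.mem_nhds hx) hf
  unfold pdchi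
  rw [h.fderiv_eq, fderiv_fun_const]
  simp

lemma pdt_comb {f g h : ℝ × ℝ → ℝ} {x : ℝ × ℝ}
    (hf : DifferentiableAt ℝ f x) (hg : DifferentiableAt ℝ g x)
    (hh : DifferentiableAt ℝ h x) :
    pdt (fun y => f y + 3 * g y + 3 * h y ^ 2) x
      = pdt f x + 3 * pdt g x + 6 * h x * pdt h x := by
  unfold pdt
  have : (fun y => f y + 3 * g y + 3 * h y ^ 2)
      = fun y => f y + 3 * g y + 3 * (h y * h y) := by
    funext y; ring
  rw [this, fderiv_fun_add (f := fun y => f y + 3 * g y) (g := fun y => 3 * (h y * h y)) (hf.add ((differentiableAt_const _).mul hg))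
      ((differentiableAt_const _).mul (hh.mul hh)),
    fderiv_fun_add (g := fun y => 3 * g y) hf ((differentiableAt_const _).mul hg),
    fderiv_const_mul hg, fderiv_const_mul (a := fun y => h y * h y) (hh.mul hh), fderiv_fun_mul hh hh]
  simp
  ring

theorem stmt_3 (S : LRSII)
    (hTheta : ∀ x ∈ S.U, S.Theta x = 0)
    (haccel : ∀ x ∈ S.U, S.accel x = 0)
    (hQ : ∀ x ∈ S.U, S.Q x = 0)
    (hPi : ∀ x ∈ S.U, S.Pi x = 0) :
    ∀ x ∈ S.U, dotd S.A S.p x = (S.Sigma x ^ 2 + 2 * S.curlyE x) * S.Sigma x := by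
  intro x hx
  have hAne : S.A x ≠ 0 := ne_of_gt (S.hApos x hx)
  have hpT : pdt S.Theta x = 0 := pdt_zero_of_eq_zero S.hUopen hTheta hx
  have hdT : dotd S.A S.Theta x = 0 := by simp [dotd, hpT]
  have hchiQ : pdchi S.Q x = 0 := pdchi_zero_of_eq_zero S.hUopen hQ hx
  -- M1 gives rho + 3p + 3Σ² = 0 on U
  have key : ∀ y ∈ S.U, S.rho y + 3 * S.p y + 3 * S.Sigma y ^ 2 = 0 := by
    intro y hy
    have hpT' : pdt S.Theta y = 0 := pdt_zero_of_eq_zero S.hUopen hTheta hy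
    have hchiA' : pdchi S.accel y = 0 := pdchi_zero_of_eq_zero S.hUopen haccel hy
    have hM := S.M1 y hy
    rw [hTheta y hy, haccel y hy] at hM
    simp [hatd, dotd, hpT', hchiA'] at hM
    linarith
  -- M2: ρ̇ = 0
  have hrhodot : pdt S.rho x = 0 := by
    have hM := S.M2 x hx
    rw [hTheta x hx, haccel x hx, hQ x hx, hPi x hx] at hM
    simp [hatd, dotd, hchiQ] at hM
    rcases hM with h | h
    · exact absurd h hAne
    · exact h
  -- E1: Σ̇ = -Σ²/2 - ℰ
  have hSigdot : (1 / S.A x) * pdt S.Sigma x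
      = -(S.Sigma x ^ 2 / 2) - S.curlyE x := by
    have hE := S.E1 x hx
    have hrp : S.rho x + 3 * S.p x = -(3 * S.Sigma x ^ 2) := by
      have := key x hx; linarith
    rw [hTheta x hx, haccel x hx, hPi x hx, hrp, hdT] at hE
    simp only [dotd] at hE
    nlinarith [hE]
  -- differentiate the key relation in t
  have hdiff : ∀ f : ℝ × ℝ → ℝ, ContDiffOn ℝ (⊤ : ℕ∞) f S.U → DifferentiableAt ℝ f x :=
    fun f hf => (hf.contDiffAt (S.hUopen.mem_nhds hx)).differentiableAt (by simp)
  have hdg : pdt (fun y => S.rho y + 3 * S.p y + 3 * S.Sigma y ^ 2) x = 0 :=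
    pdt_zero_of_eq_zero S.hUopen key hx
  have hcomb := pdt_comb (hdiff _ S.hrho) (hdiff _ S.hp) (hdiff _ S.hSigma)
  rw [hdg, hrhodot] at hcomb
  have hpp : pdt S.p x = -2 * S.Sigma x * pdt S.Sigma x := by linarith
  show (1 / S.A x) * pdt S.p x = _
  rw [hpp]
  have : (1 / S.A x) * (-2 * S.Sigma x * pdt S.Sigma x)
      = -2 * S.Sigma x * ((1 / S.A x) * pdt S.Sigma x) := by ring
  rw [this, hSigdot]
  ring
end

section
/- Suppose Θ = 0, 𝒜 = 0, Q = 0 and Π = 0 identically on U, and that Σ is nowhere zero on U. Then the propagation of the energy density is given by ρ̂ = 9φ·((3/4)Σ² + ℰ) at every point of U. -/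
lemma fderiv_eq_of_eqOn' {U : Set (ℝ × ℝ)} (hU : IsOpen U) {f g : ℝ × ℝ → ℝ}
    (h : ∀ y ∈ U, f y = g y) {x : ℝ × ℝ} (hx : x ∈ U) :
    fderiv ℝ f x = fderiv ℝ g x :=
  Filter.EventuallyEq.fderiv_eq (Filter.eventually_of_mem (hU.mem_nhds hx) h)

lemma fderiv_eq_zero_of_eqOn_zero' {U : Set (ℝ × ℝ)} (hU : IsOpen U) {f : ℝ × ℝ → ℝ}
    (h : ∀ y ∈ U, f y = 0) {x : ℝ × ℝ} (hx : x ∈ U) :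
    fderiv ℝ f x = 0 := by
  rw [fderiv_eq_of_eqOn' hU (g := fun _ => (0:ℝ)) h hx]
  simp

lemma pd_add' {f g : ℝ × ℝ → ℝ} {x v : ℝ × ℝ} (hf : DifferentiableAt ℝ f x)
    (hg : DifferentiableAt ℝ g x) :
    fderiv ℝ (fun y => f y + g y) x v = fderiv ℝ f x v + fderiv ℝ g x v := by
  rw [fderiv_fun_add hf hg]; simp

lemma pd_const_mul' {f : ℝ × ℝ → ℝ} {x v : ℝ × ℝ} (c : ℝ) (hf : DifferentiableAt ℝ f x) :
    fderiv ℝ (fun y => c * f y) x v = c * fderiv ℝ f x v := by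
  rw [fderiv_const_mul hf c]; simp

lemma pd_mul' {f g : ℝ × ℝ → ℝ} {x v : ℝ × ℝ} (hf : DifferentiableAt ℝ f x)
    (hg : DifferentiableAt ℝ g x) :
    fderiv ℝ (fun y => f y * g y) x v = fderiv ℝ f x v * g x + f x * fderiv ℝ g x v := by
  rw [fderiv_fun_mul hf hg]; simp [smul_eq_mul]; ring

lemma pd_symm' {U : Set (ℝ × ℝ)} (hU : IsOpen U) {f : ℝ × ℝ → ℝ}
    (hf : ContDiffOn ℝ (⊤ : ℕ∞) f U) {x : ℝ × ℝ} (hx : x ∈ U) :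
    fderiv ℝ (fun y => fderiv ℝ f y (0, 1)) x (1, 0)
      = fderiv ℝ (fun y => fderiv ℝ f y (1, 0)) x (0, 1) := by
  have hfa : ContDiffAt ℝ (⊤ : ℕ∞) f x := hf.contDiffAt (hU.mem_nhds hx)
  have hf' : DifferentiableAt ℝ (fderiv ℝ f) x :=
    (hfa.fderiv_right (m := 1) (WithTop.coe_le_coe.mpr le_top)).differentiableAt one_ne_zero
  have hsymm : IsSymmSndFDerivAt ℝ f x := hfa.isSymmSndFDerivAt (by rw [minSmoothness_of_isRCLikeNormedField]; exact WithTop.coe_le_coe.mpr le_top)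
  have key : ∀ v : ℝ × ℝ, fderiv ℝ (fun y => fderiv ℝ f y v) x
      = (fderiv ℝ (fderiv ℝ f) x).flip v := by
    intro v
    rw [fderiv_clm_apply hf' (differentiableAt_const v)]
    simp
  rw [key, key]
  simp only [ContinuousLinearMap.flip_apply]
  exact hsymm _ _


theorem stmt_4 (S : LRSII)
    (hTheta : ∀ x ∈ S.U, S.Theta x = 0)
    (haccel : ∀ x ∈ S.U, S.accel x = 0)
    (hQ : ∀ x ∈ S.U, S.Q x = 0)
    (hPi : ∀ x ∈ S.U, S.Pi x = 0)
    (hSigma_ne : ∀ x ∈ S.U, S.Sigma x ≠ 0) :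
    ∀ x ∈ S.U, hatd S.B S.rho x = 9 * S.phi x * ((3 / 4) * S.Sigma x ^ 2 + S.curlyE x) := by

  have hUo := S.hUopen
  have diffAt : ∀ {f : ℝ × ℝ → ℝ}, ContDiffOn ℝ (⊤ : ℕ∞) f S.U → ∀ {y : ℝ × ℝ}, y ∈ S.U →
      DifferentiableAt ℝ f y := fun {f} hf {y} hy =>
    (hf.contDiffAt (hUo.mem_nhds hy)).differentiableAt (by simp)
  have hTd : ∀ y ∈ S.U, fderiv ℝ S.Theta y = 0 := fun y hy =>
    fderiv_eq_zero_of_eqOn_zero' hUo hTheta hy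
  have hAd : ∀ y ∈ S.U, fderiv ℝ S.accel y = 0 := fun y hy =>
    fderiv_eq_zero_of_eqOn_zero' hUo haccel hy
  have hQd : ∀ y ∈ S.U, fderiv ℝ S.Q y = 0 := fun y hy =>
    fderiv_eq_zero_of_eqOn_zero' hUo hQ hy
  have hPd : ∀ y ∈ S.U, fderiv ℝ S.Pi y = 0 := fun y hy =>
    fderiv_eq_zero_of_eqOn_zero' hUo hPi hy
  -- (b) algebraic relation from M1
  have key1 : ∀ y ∈ S.U, S.rho y + 3 * S.p y + 3 * S.Sigma y ^ 2 = 0 := by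
    intro y hy
    have h := S.M1 y hy
    simp [hatd, dotd, pdt, pdchi, hTd y hy, hAd y hy, hTheta y hy, haccel y hy] at h
    nlinarith [h]
  -- (c) p̂ = 0 from M3
  have hpchi : ∀ y ∈ S.U, fderiv ℝ S.p y (0, 1) = 0 := by
    intro y hy
    have h := S.M3 y hy
    have hB := (S.hBpos y hy).ne'
    simp [hatd, dotd, pdt, pdchi, hPd y hy, hQd y hy, hQ y hy, hPi y hy, haccel y hy] at h
    exact h.resolve_left hB
  -- (d) Σ̂ from P1
  have hSchi : ∀ y ∈ S.U, fderiv ℝ S.Sigma y (0, 1)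
      = -(3 / 2) * S.B y * S.phi y * S.Sigma y := by
    intro y hy
    have h := S.P1 y hy
    have hB := (S.hBpos y hy).ne'
    simp [hatd, dotd, pdt, pdchi, hTd y hy, hQ y hy] at h
    field_simp at h
    linear_combination (-1/2 : ℝ) * h
  -- (e) ρ̂ from hatting the algebraic relation
  have hrchi : ∀ y ∈ S.U, fderiv ℝ S.rho y (0, 1)
      = 9 * (S.B y * (S.phi y * (S.Sigma y * S.Sigma y))) := by
    intro y hy
    have hrd := diffAt S.hrho hy
    have hpd := diffAt S.hp hy
    have hSd := diffAt S.hSigma hy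
    have h0 : fderiv ℝ (fun z => S.rho z + (3 * S.p z + 3 * (S.Sigma z * S.Sigma z))) y = 0 :=
      fderiv_eq_zero_of_eqOn_zero' hUo (fun z hz => by linear_combination key1 z hz) hy
    have h1 : fderiv ℝ (fun z => S.rho z + (3 * S.p z + 3 * (S.Sigma z * S.Sigma z))) y (0, 1)
        = 0 := by rw [h0]; rfl
    rw [pd_add' (g := fun z => 3 * S.p z + 3 * (S.Sigma z * S.Sigma z)) hrd ((hpd.const_mul 3).add ((hSd.mul hSd).const_mul 3)),
        pd_add' (f := fun z => 3 * S.p z) (g := fun z => 3 * (S.Sigma z * S.Sigma z)) (hpd.const_mul 3) ((hSd.mul hSd).const_mul 3),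
        pd_const_mul' 3 hpd, pd_const_mul' (f := fun z => S.Sigma z * S.Sigma z) 3 (hSd.mul hSd), pd_mul' hSd hSd,
        hpchi y hy, hSchi y hy] at h1
    linear_combination h1
  -- (f) ρ̇ = 0 from M2
  have hrt : ∀ y ∈ S.U, fderiv ℝ S.rho y (1, 0) = 0 := by
    intro y hy
    have h := S.M2 y hy
    have hA := (S.hApos y hy).ne'
    simp [hatd, dotd, pdt, pdchi, hQd y hy, hTheta y hy, hQ y hy, hPi y hy] at h
    exact h.resolve_left hA
  intro x hx
  have hA := (S.hApos x hx).ne'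
  have hB := (S.hBpos x hx).ne'
  have hS := hSigma_ne x hx
  -- (g) Ḃ from compat2
  have hBt : fderiv ℝ S.B x (1, 0) = S.A x * S.B x * S.Sigma x := by
    have h := S.compat2 x hx
    simp [pdt, hTheta x hx] at h
    field_simp at h
    linear_combination (-1 : ℝ) * h
  -- (h) φ̇ from E2
  have hpht : fderiv ℝ S.phi x (1, 0) = S.A x * (S.Sigma x * S.phi x) / 2 := by
    have h := S.E2 x hx
    simp [dotd, pdt, hTheta x hx, haccel x hx, hQ x hx] at h
    field_simp at h
    linear_combination (1/2 : ℝ) * h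
  -- (i) Σ̇ from E1
  have hSt : fderiv ℝ S.Sigma x (1, 0)
      = S.A x * (-(S.Sigma x * S.Sigma x) / 2 - S.curlyE x) := by
    have h := S.E1 x hx
    have hk := key1 x hx
    simp [dotd, pdt, hTd x hx, hTheta x hx, haccel x hx, hPi x hx] at h
    field_simp at h
    linear_combination (-1/6 : ℝ) * h + (S.A x / 3) * hk
  -- (j) the constraint φ(ℰ - Σ²/4) = 0 from symmetry of second derivatives
  have hsym := pd_symm' hUo S.hrho hx
  have hR : fderiv ℝ (fun y => fderiv ℝ S.rho y (1, 0)) x (0, 1) = 0 := by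
    rw [fderiv_eq_zero_of_eqOn_zero' hUo hrt hx]; rfl
  have hL : fderiv ℝ (fun y => fderiv ℝ S.rho y (0, 1)) x
      = fderiv ℝ (fun y => 9 * (S.B y * (S.phi y * (S.Sigma y * S.Sigma y)))) x :=
    fderiv_eq_of_eqOn' hUo hrchi hx
  have hBd := diffAt S.hBsmooth hx
  have hphd := diffAt S.hphi hx
  have hSd := diffAt S.hSigma hx
  have hz : fderiv ℝ (fun y => 9 * (S.B y * (S.phi y * (S.Sigma y * S.Sigma y)))) x (1, 0)
      = 0 := by
    rw [← hL, hsym, hR]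
  rw [pd_const_mul' (f := fun y => S.B y * (S.phi y * (S.Sigma y * S.Sigma y))) 9 (hBd.mul (hphd.mul (hSd.mul hSd))),
      pd_mul' (g := fun y => S.phi y * (S.Sigma y * S.Sigma y)) hBd (hphd.mul (hSd.mul hSd)),
      pd_mul' (g := fun y => S.Sigma y * S.Sigma y) hphd (hSd.mul hSd), pd_mul' hSd hSd,
      hBt, hpht, hSt] at hz
  have hkey : S.phi x * (S.curlyE x - S.Sigma x ^ 2 / 4) = 0 := by
    have hABS : S.A x * S.B x * S.Sigma x ≠ 0 := mul_ne_zero (mul_ne_zero hA hB) hS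
    have h2 : S.A x * S.B x * S.Sigma x
        * (S.phi x * (S.curlyE x - S.Sigma x ^ 2 / 4)) = 0 := by
      linear_combination (-1 / 18 : ℝ) * hz
    exact (mul_eq_zero.mp h2).resolve_left hABS
  -- conclusion
  simp only [hatd, pdchi]
  rw [hrchi x hx]
  field_simp
  linear_combination (-4 : ℝ) * hkey
end

section
/- Suppose Θ = 0, 𝒜 = 0, Q = 0 and Π = 0 identically on U. Then the propagation of the electric Weyl scalar is given by ℰ̂ = (3/2)φ·(Σ² − ℰ) at every point of U. -/
open Topology Filter

section helpers
variable {U : Set (ℝ × ℝ)} {f g : ℝ × ℝ → ℝ} {x : ℝ × ℝ} {v : ℝ × ℝ}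

lemma my_diffAt (hU : IsOpen U) (hf : ContDiffOn ℝ (⊤ : ℕ∞) f U) (hx : x ∈ U) :
    DifferentiableAt ℝ f x :=
  (hf.contDiffAt (hU.mem_nhds hx)).differentiableAt (by simp)

lemma fderiv_congr_on (hU : IsOpen U) (hx : x ∈ U) (h : ∀ y ∈ U, f y = g y) :
    fderiv ℝ f x = fderiv ℝ g x :=
  Filter.EventuallyEq.fderiv_eq (Filter.eventuallyEq_of_mem (hU.mem_nhds hx) h)

lemma fderiv_zero_on (hU : IsOpen U) (hx : x ∈ U) (h : ∀ y ∈ U, f y = 0) :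
    fderiv ℝ f x v = 0 := by
  rw [fderiv_congr_on hU hx (g := fun _ => (0:ℝ)) h]
  simp

lemma fderiv_mul_apply (hf : DifferentiableAt ℝ f x) (hg : DifferentiableAt ℝ g x) :
    fderiv ℝ (fun y => f y * g y) x v
      = f x * fderiv ℝ g x v + g x * fderiv ℝ f x v := by
  rw [fderiv_fun_mul hf hg]; simp [mul_comm]

lemma fderiv_add_apply' (hf : DifferentiableAt ℝ f x) (hg : DifferentiableAt ℝ g x) :
    fderiv ℝ (fun y => f y + g y) x v = fderiv ℝ f x v + fderiv ℝ g x v := by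
  rw [fderiv_fun_add hf hg]; simp

lemma fderiv_cmul_apply (hf : DifferentiableAt ℝ f x) (a : ℝ) :
    fderiv ℝ (fun y => a * f y) x v = a * fderiv ℝ f x v := by
  rw [fderiv_const_mul hf a]; simp

lemma fderiv_comb_apply (hf : DifferentiableAt ℝ f x) (hg : DifferentiableAt ℝ g x)
    (a b : ℝ) :
    fderiv ℝ (fun y => a * f y + b * (g y * g y)) x v
      = a * fderiv ℝ f x v + b * (2 * g x * fderiv ℝ g x v) := by
  have h1 : DifferentiableAt ℝ (fun y => a * f y) x := hf.const_mul a
  have h2 : DifferentiableAt ℝ (fun y => g y * g y) x := hg.mul hg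
  rw [fderiv_fun_add h1 (h2.const_mul b)]
  simp only [ContinuousLinearMap.add_apply]
  rw [fderiv_const_mul hf a, fderiv_const_mul h2 b]
  simp only [ContinuousLinearMap.smul_apply, smul_eq_mul, fderiv_mul_apply hg hg]
  ring

lemma fderiv_fderiv_apply (hU : IsOpen U) (hf : ContDiffOn ℝ (⊤ : ℕ∞) f U) (hx : x ∈ U)
    (v w : ℝ × ℝ) :
    fderiv ℝ (fun y => fderiv ℝ f y v) x w = fderiv ℝ (fderiv ℝ f) x w v := by
  have hd2 : DifferentiableAt ℝ (fderiv ℝ f) x :=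
    ((hf.contDiffAt (hU.mem_nhds hx)).fderiv_right (m := 1) (WithTop.coe_le_coe.mpr le_top)).differentiableAt one_ne_zero
  have h := (ContinuousLinearMap.apply ℝ ℝ v).hasFDerivAt.comp x hd2.hasFDerivAt
  have he : (fun y => fderiv ℝ f y v)
      = (ContinuousLinearMap.apply ℝ ℝ v) ∘ (fderiv ℝ f) := rfl
  rw [he, h.fderiv]
  rfl

lemma schwarz_zero (hU : IsOpen U) (hf : ContDiffOn ℝ (⊤ : ℕ∞) f U) (hx : x ∈ U)
    (h : ∀ y ∈ U, fderiv ℝ f y ((0:ℝ), (1:ℝ)) = 0) :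
    fderiv ℝ (fun y => fderiv ℝ f y ((1:ℝ), (0:ℝ))) x ((0:ℝ), (1:ℝ)) = 0 := by
  have hsymm : IsSymmSndFDerivAt ℝ f x :=
    (hf.contDiffAt (hU.mem_nhds hx)).isSymmSndFDerivAt (by rw [minSmoothness_of_isRCLikeNormedField]; exact WithTop.coe_le_coe.mpr le_top)
  rw [fderiv_fderiv_apply hU hf hx, hsymm.eq, ← fderiv_fderiv_apply hU hf hx]
  have : fderiv ℝ (fun y => fderiv ℝ f y ((0:ℝ),(1:ℝ))) x
      = fderiv ℝ (fun _ => (0:ℝ)) x :=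
    Filter.EventuallyEq.fderiv_eq (Filter.eventuallyEq_of_mem (hU.mem_nhds hx) h)
  rw [this]; simp

end helpers

theorem stmt_5 (S : LRSII)
    (hTheta : ∀ x ∈ S.U, S.Theta x = 0)
    (haccel : ∀ x ∈ S.U, S.accel x = 0)
    (hQ : ∀ x ∈ S.U, S.Q x = 0)
    (hPi : ∀ x ∈ S.U, S.Pi x = 0) :
    ∀ x ∈ S.U, hatd S.B S.curlyE x = (3 / 2) * S.phi x * (S.Sigma x ^ 2 - S.curlyE x) := by
  have hU := S.hUopen
  -- vanishing derivatives of the identically-zero fields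
  have dTht : ∀ x ∈ S.U, pdt S.Theta x = 0 := fun x hx => fderiv_zero_on hU hx hTheta
  have dThc : ∀ x ∈ S.U, pdchi S.Theta x = 0 := fun x hx => fderiv_zero_on hU hx hTheta
  have dact : ∀ x ∈ S.U, pdt S.accel x = 0 := fun x hx => fderiv_zero_on hU hx haccel
  have dacc : ∀ x ∈ S.U, pdchi S.accel x = 0 := fun x hx => fderiv_zero_on hU hx haccel
  have dQt : ∀ x ∈ S.U, pdt S.Q x = 0 := fun x hx => fderiv_zero_on hU hx hQ
  have dQc : ∀ x ∈ S.U, pdchi S.Q x = 0 := fun x hx => fderiv_zero_on hU hx hQ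
  have dPit : ∀ x ∈ S.U, pdt S.Pi x = 0 := fun x hx => fderiv_zero_on hU hx hPi
  have dPic : ∀ x ∈ S.U, pdchi S.Pi x = 0 := fun x hx => fderiv_zero_on hU hx hPi
  -- (F1) rho = -3p - 3Σ²
  have F1 : ∀ x ∈ S.U, S.rho x = -3 * S.p x - 3 * (S.Sigma x * S.Sigma x) := by
    intro x hx
    have e := S.M1 x hx
    simp only [hatd, dotd] at e
    rw [dacc x hx, dTht x hx, haccel x hx, hTheta x hx] at e
    nlinarith [e]
  -- (F2) ∂χΣ = -(3/2) φ Σ B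
  have F2 : ∀ x ∈ S.U, pdchi S.Sigma x = -(3/2) * S.phi x * S.Sigma x * S.B x := by
    intro x hx
    have hb := (S.hBpos x hx).ne'
    have e := S.P1 x hx
    simp only [hatd] at e
    rw [dThc x hx, hQ x hx] at e
    field_simp at e
    linarith
  -- (F3) ∂χℰ = ∂χρ/3 - (3/2) φ ℰ B
  have F3 : ∀ x ∈ S.U, pdchi S.curlyE x
      = pdchi S.rho x / 3 - (3/2) * S.phi x * S.curlyE x * S.B x := by
    intro x hx
    have hb := (S.hBpos x hx).ne'
    have e := S.P3 x hx
    simp only [hatd] at e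
    rw [dPic x hx, hTheta x hx, hQ x hx, hPi x hx] at e
    field_simp at e
    have h6 : (6:ℝ) * S.B x ≠ 0 := by positivity
    refine mul_left_cancel₀ h6 ?_
    linear_combination (S.B x / 2) * e
  -- (F4) ∂χp = 0
  have F4 : ∀ x ∈ S.U, pdchi S.p x = 0 := by
    intro x hx
    have hb := (S.hBpos x hx).ne'
    have ha := (S.hApos x hx).ne'
    have e := S.M3 x hx
    simp only [hatd, dotd] at e
    rw [dPic x hx, dQt x hx, hTheta x hx, hQ x hx, hPi x hx, haccel x hx] at e
    field_simp at e
    simpa [ha] using e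
  -- (F5) ∂ₜρ = 0
  have F5 : ∀ x ∈ S.U, pdt S.rho x = 0 := by
    intro x hx
    have hb := (S.hBpos x hx).ne'
    have ha := (S.hApos x hx).ne'
    have e := S.M2 x hx
    simp only [hatd, dotd] at e
    rw [dQc x hx, hTheta x hx, hQ x hx, hPi x hx] at e
    field_simp at e
    simpa [hb] using e
  -- (F6) ∂ₜΣ = -A(Σ²/2 + ℰ)
  have F6 : ∀ x ∈ S.U, pdt S.Sigma x
      = -(S.A x) * ((S.Sigma x * S.Sigma x) / 2 + S.curlyE x) := by
    intro x hx
    have ha := (S.hApos x hx).ne'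
    have e := S.E1 x hx
    simp only [dotd] at e
    rw [dTht x hx, hTheta x hx, haccel x hx, hPi x hx, F1 x hx] at e
    field_simp at e
    nlinarith [e]
  -- differentiability at points of U
  -- (F9) ∂χρ = 9 φ Σ² B
  have F9 : ∀ x ∈ S.U, pdchi S.rho x = 9 * S.phi x * (S.Sigma x * S.Sigma x) * S.B x := by
    intro x hx
    have hdp := my_diffAt hU S.hp hx
    have hdS := my_diffAt hU S.hSigma hx
    have hc : fderiv ℝ S.rho x
        = fderiv ℝ (fun y => (-3) * S.p y + (-3) * (S.Sigma y * S.Sigma y)) x :=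
      fderiv_congr_on hU hx (fun y hy => by rw [F1 y hy]; ring)
    have := fderiv_comb_apply (v := ((0:ℝ),(1:ℝ))) hdp hdS (-3) (-3)
    show fderiv ℝ S.rho x ((0:ℝ),(1:ℝ)) = _
    rw [hc, this]
    have h4 : fderiv ℝ S.p x ((0:ℝ),(1:ℝ)) = 0 := F4 x hx
    have h2 : fderiv ℝ S.Sigma x ((0:ℝ),(1:ℝ)) = -(3/2) * S.phi x * S.Sigma x * S.B x :=
      F2 x hx
    rw [h4, h2]; ring
  -- (F10) ∂χℰ = 3 φ Σ² B - (3/2) φ ℰ B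
  have F10 : ∀ x ∈ S.U, pdchi S.curlyE x
      = 3 * S.phi x * (S.Sigma x * S.Sigma x) * S.B x
        - (3/2) * S.phi x * S.curlyE x * S.B x := by
    intro x hx
    rw [F3 x hx, F9 x hx]; ring
  -- (F11) ∂ₜp = A(Σ³ + 2Σℰ)
  have F11 : ∀ x ∈ S.U, pdt S.p x
      = S.A x * (S.Sigma x * (S.Sigma x * S.Sigma x + 2 * S.curlyE x)) := by
    intro x hx
    have hdp := my_diffAt hU S.hp hx
    have hdS := my_diffAt hU S.hSigma hx
    have hc : fderiv ℝ S.rho x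
        = fderiv ℝ (fun y => (-3) * S.p y + (-3) * (S.Sigma y * S.Sigma y)) x :=
      fderiv_congr_on hU hx (fun y hy => by rw [F1 y hy]; ring)
    have hcomb := fderiv_comb_apply (v := ((1:ℝ),(0:ℝ))) hdp hdS (-3) (-3)
    have h5 : fderiv ℝ S.rho x ((1:ℝ),(0:ℝ)) = 0 := F5 x hx
    have h6 : fderiv ℝ S.Sigma x ((1:ℝ),(0:ℝ))
        = -(S.A x) * ((S.Sigma x * S.Sigma x) / 2 + S.curlyE x) := F6 x hx
    rw [hc, hcomb, h6] at h5
    show fderiv ℝ S.p x ((1:ℝ),(0:ℝ)) = _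
    linarith [h5]
  -- ∂χA = 0
  have L1 : ∀ x ∈ S.U, pdchi S.A x = 0 := by
    intro x hx
    have ha := (S.hApos x hx).ne'
    have hb := (S.hBpos x hx).ne'
    have e := S.compat1 x hx
    rw [haccel x hx] at e
    field_simp at e
    simpa using e.symm
  -- (C2) φΣ³ = 4φΣℰ  (from Schwarz symmetry of second derivatives of p)
  have C2 : ∀ x ∈ S.U, S.phi x * (S.Sigma x * S.Sigma x * S.Sigma x)
      = 4 * S.phi x * S.Sigma x * S.curlyE x := by
    intro x hx
    have ha := S.hApos x hx
    have hb := (S.hBpos x hx).ne'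
    have hdA := my_diffAt hU S.hAsmooth hx
    have hdS := my_diffAt hU S.hSigma hx
    have hdE := my_diffAt hU S.hcurlyE hx
    have hdk : DifferentiableAt ℝ (fun y => S.Sigma y * S.Sigma y + 2 * S.curlyE y) x :=
      (hdS.mul hdS).add (hdE.const_mul 2)
    have hdh : DifferentiableAt ℝ
        (fun y => S.Sigma y * (S.Sigma y * S.Sigma y + 2 * S.curlyE y)) x := hdS.mul hdk
    have C0 : fderiv ℝ (fun y => fderiv ℝ S.p y ((1:ℝ),(0:ℝ))) x ((0:ℝ),(1:ℝ)) = 0 :=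
      schwarz_zero hU S.hp hx (fun y hy => F4 y hy)
    have hc : fderiv ℝ (fun y => fderiv ℝ S.p y ((1:ℝ),(0:ℝ))) x
        = fderiv ℝ (fun y =>
            S.A y * (S.Sigma y * (S.Sigma y * S.Sigma y + 2 * S.curlyE y))) x :=
      fderiv_congr_on hU hx (fun y hy => F11 y hy)
    rw [hc] at C0
    rw [fderiv_mul_apply hdA hdh, fderiv_mul_apply hdS hdk,
        fderiv_add_apply' (f := fun y => S.Sigma y * S.Sigma y) (hdS.mul hdS) (hdE.const_mul 2),
        fderiv_mul_apply hdS hdS, fderiv_cmul_apply hdE] at C0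
    have hA0 : fderiv ℝ S.A x ((0:ℝ),(1:ℝ)) = 0 := L1 x hx
    have h2 : fderiv ℝ S.Sigma x ((0:ℝ),(1:ℝ)) = -(3/2) * S.phi x * S.Sigma x * S.B x :=
      F2 x hx
    have h10 : fderiv ℝ S.curlyE x ((0:ℝ),(1:ℝ))
        = 3 * S.phi x * (S.Sigma x * S.Sigma x) * S.B x
          - (3/2) * S.phi x * S.curlyE x * S.B x := F10 x hx
    rw [hA0, h2, h10] at C0
    -- C0 : A * ( ... ) + ... * 0 = 0 ; divide by A and B
    have hane := ha.ne'
    have key : S.B x * (S.phi x * (S.Sigma x * S.Sigma x * S.Sigma x)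
        - 4 * S.phi x * S.Sigma x * S.curlyE x) = 0 := by
      have hAx : S.A x ≠ 0 := hane
      field_simp at C0
      nlinarith [C0, ha]
    have := mul_eq_zero.mp key
    rcases this with h | h
    · exact absurd h hb
    · linarith
  -- (D) φΣ² = 0 everywhere on U
  have D : ∀ x ∈ S.U, S.phi x * (S.Sigma x * S.Sigma x) = 0 := by
    intro x hx
    by_contra hne
    have hphiSig : S.phi x * S.Sigma x ≠ 0 := by
      intro h
      apply hne
      have : S.phi x * (S.Sigma x * S.Sigma x) = (S.phi x * S.Sigma x) * S.Sigma x := by ring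
      rw [this, h, zero_mul]
    set V := S.U ∩ ((fun y => S.phi y * S.Sigma y) ⁻¹' ({0}ᶜ : Set ℝ)) with hV
    have hVopen : IsOpen V :=
      ((S.hphi.continuousOn.mul S.hSigma.continuousOn)).isOpen_inter_preimage hU
        isOpen_compl_singleton
    have hxV : x ∈ V := ⟨hx, hphiSig⟩
    have hEq : ∀ y ∈ V, S.curlyE y = S.Sigma y * S.Sigma y / 4 := by
      intro y hy
      have hc2 := C2 y hy.1
      have hmul : (S.phi y * S.Sigma y) * (S.Sigma y * S.Sigma y - 4 * S.curlyE y) = 0 := by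
        linear_combination hc2
      have := (mul_eq_zero.mp hmul).resolve_left hy.2
      linarith
    have hdE := my_diffAt hU S.hcurlyE hx
    have hdS := my_diffAt hU S.hSigma hx
    have hc : fderiv ℝ S.curlyE x
        = fderiv ℝ (fun y => (0:ℝ) * S.curlyE y + (1/4) * (S.Sigma y * S.Sigma y)) x :=
      fderiv_congr_on hVopen hxV (fun y hy => by rw [hEq y hy]; ring)
    have hval : pdchi S.curlyE x
        = 0 * pdchi S.curlyE x + (1/4) * (2 * S.Sigma x * pdchi S.Sigma x) := by
      show fderiv ℝ S.curlyE x ((0:ℝ),(1:ℝ)) = _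
      rw [hc, fderiv_comb_apply hdE hdS 0 (1/4)]
      rfl
    rw [F10 x hx, F2 x hx] at hval
    have hE4 : S.curlyE x = S.Sigma x * S.Sigma x / 4 := hEq x hxV
    rw [hE4] at hval
    have hBne := (S.hBpos x hx).ne'
    have h0 : S.phi x * (S.Sigma x * S.Sigma x) * S.B x = 0 := by
      linear_combination (8/27) * hval
    exact hne ((mul_eq_zero.mp h0).resolve_right hBne)
  -- conclusion
  intro x hx
  have hb := (S.hBpos x hx).ne'
  have hD := D x hx
  have hkey : pdchi S.curlyE x
      = (3 / 2) * S.phi x * (S.Sigma x ^ 2 - S.curlyE x) * S.B x := by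
    rw [F10 x hx]
    linear_combination (3/2) * S.B x * hD
  show (1 / S.B x) * pdchi S.curlyE x = _
  rw [hkey]
  field_simp
end

section
/- Suppose Θ = 0, 𝒜 = 0, Q = 0 and Π = 0 identically on U. Then ρ̂ = (9/2)φΣ² at every point of U. -/
section Helpers

private lemma fderiv_congr_open {f g : ℝ × ℝ → ℝ} {s : Set (ℝ × ℝ)} (hs : IsOpen s) {x : ℝ × ℝ}
    (hx : x ∈ s) (h : ∀ y ∈ s, f y = g y) : fderiv ℝ f x = fderiv ℝ g x :=
  (Filter.eventuallyEq_of_mem (hs.mem_nhds hx) h).fderiv_eq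

private lemma pdt_congr_open {f g : ℝ × ℝ → ℝ} {s : Set (ℝ × ℝ)} (hs : IsOpen s) {x : ℝ × ℝ}
    (hx : x ∈ s) (h : ∀ y ∈ s, f y = g y) : pdt f x = pdt g x := by
  unfold pdt; rw [fderiv_congr_open hs hx h]

private lemma pdchi_congr_open {f g : ℝ × ℝ → ℝ} {s : Set (ℝ × ℝ)} (hs : IsOpen s) {x : ℝ × ℝ}
    (hx : x ∈ s) (h : ∀ y ∈ s, f y = g y) : pdchi f x = pdchi g x := by
  unfold pdchi; rw [fderiv_congr_open hs hx h]

private lemma pdt_zero_open {f : ℝ × ℝ → ℝ} {s : Set (ℝ × ℝ)} (hs : IsOpen s) {x : ℝ × ℝ}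
    (hx : x ∈ s) (h : ∀ y ∈ s, f y = 0) : pdt f x = 0 := by
  rw [pdt_congr_open hs hx (g := fun _ => (0:ℝ)) h]; simp [pdt]

private lemma pdchi_zero_open {f : ℝ × ℝ → ℝ} {s : Set (ℝ × ℝ)} (hs : IsOpen s) {x : ℝ × ℝ}
    (hx : x ∈ s) (h : ∀ y ∈ s, f y = 0) : pdchi f x = 0 := by
  rw [pdchi_congr_open hs hx (g := fun _ => (0:ℝ)) h]; simp [pdchi]

private lemma fd_mul {f g : ℝ × ℝ → ℝ} {x : ℝ × ℝ} (v : ℝ × ℝ)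
    (hf : DifferentiableAt ℝ f x) (hg : DifferentiableAt ℝ g x) :
    fderiv ℝ (fun y => f y * g y) x v = fderiv ℝ f x v * g x + f x * fderiv ℝ g x v := by
  rw [fderiv_fun_mul hf hg]
  simp [smul_eq_mul]
  ring

private lemma fd_sub {f g : ℝ × ℝ → ℝ} {x : ℝ × ℝ} (v : ℝ × ℝ)
    (hf : DifferentiableAt ℝ f x) (hg : DifferentiableAt ℝ g x) :
    fderiv ℝ (fun y => f y - g y) x v = fderiv ℝ f x v - fderiv ℝ g x v := by
  rw [fderiv_fun_sub hf hg]; simp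

private lemma fd_const_mul {f : ℝ × ℝ → ℝ} {x : ℝ × ℝ} (v : ℝ × ℝ) (c : ℝ)
    (hf : DifferentiableAt ℝ f x) :
    fderiv ℝ (fun y => c * f y) x v = c * fderiv ℝ f x v := by
  rw [fderiv_const_mul hf c]; simp

private lemma schwarz {f : ℝ × ℝ → ℝ} {x : ℝ × ℝ} (hf : ContDiffAt ℝ 2 f x) :
    pdt (pdchi f) x = pdchi (pdt f) x := by
  have hd : DifferentiableAt ℝ (fderiv ℝ f) x :=
    (hf.fderiv_right (m := 1) (by norm_num)).differentiableAt (by norm_num)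
  have hsymm : IsSymmSndFDerivAt ℝ f x := hf.isSymmSndFDerivAt (by simp)
  have key : ∀ v w : ℝ × ℝ, fderiv ℝ (fun y => fderiv ℝ f y v) x w
      = fderiv ℝ (fderiv ℝ f) x w v := by
    intro v w
    rw [fderiv_clm_apply hd (differentiableAt_const v)]
    simp
  show fderiv ℝ (fun y => fderiv ℝ f y (0,1)) x (1,0)
      = fderiv ℝ (fun y => fderiv ℝ f y (1,0)) x (0,1)
  rw [key, key, hsymm.eq]

end Helpers

theorem stmt_6 (S : LRSII)
    (hTheta : ∀ x ∈ S.U, S.Theta x = 0)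
    (haccel : ∀ x ∈ S.U, S.accel x = 0)
    (hQ : ∀ x ∈ S.U, S.Q x = 0)
    (hPi : ∀ x ∈ S.U, S.Pi x = 0) :
    ∀ x ∈ S.U, hatd S.B S.rho x = (9 / 2) * S.phi x * S.Sigma x ^ 2 := by
  -- basic per-point facts
  have hA0 : ∀ x ∈ S.U, S.A x ≠ 0 := fun x hx => (S.hApos x hx).ne'
  have hB0 : ∀ x ∈ S.U, S.B x ≠ 0 := fun x hx => (S.hBpos x hx).ne'
  have hmem : ∀ x ∈ S.U, S.U ∈ nhds x := fun x hx => S.hUopen.mem_nhds hx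
  have diffAt : ∀ f : ℝ × ℝ → ℝ, ContDiffOn ℝ (⊤ : ℕ∞) f S.U → ∀ x ∈ S.U, DifferentiableAt ℝ f x :=
    fun f hf x hx => (hf.contDiffAt (hmem x hx)).differentiableAt (by simp)
  have dB := diffAt _ S.hBsmooth
  have dphi := diffAt _ S.hphi
  have dSig := diffAt _ S.hSigma
  -- vanishing derivatives of Theta, accel, Q, Pi
  have zTt : ∀ x ∈ S.U, pdt S.Theta x = 0 := fun x hx => pdt_zero_open S.hUopen hx hTheta
  have zTc : ∀ x ∈ S.U, pdchi S.Theta x = 0 := fun x hx => pdchi_zero_open S.hUopen hx hTheta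
  have zAc : ∀ x ∈ S.U, pdchi S.accel x = 0 := fun x hx => pdchi_zero_open S.hUopen hx haccel
  have zQt : ∀ x ∈ S.U, pdt S.Q x = 0 := fun x hx => pdt_zero_open S.hUopen hx hQ
  have zQc : ∀ x ∈ S.U, pdchi S.Q x = 0 := fun x hx => pdchi_zero_open S.hUopen hx hQ
  have zPc : ∀ x ∈ S.U, pdchi S.Pi x = 0 := fun x hx => pdchi_zero_open S.hUopen hx hPi
  -- e1 : pdchi Sigma
  have e1 : ∀ x ∈ S.U, pdchi S.Sigma x = S.B x * (-(3/2) * S.phi x * S.Sigma x) := by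
    intro x hx
    have h := S.P1 x hx
    simp only [hatd, zTc x hx, hQ x hx] at h
    field_simp [hB0 x hx] at h
    linarith [h]
  -- e2 : rho = -3 Sigma^2 - 3 p
  have e2 : ∀ x ∈ S.U, S.rho x = -3 * (S.Sigma x * S.Sigma x) - 3 * S.p x := by
    intro x hx
    have h := S.M1 x hx
    simp only [hatd, dotd, zAc x hx, zTt x hx, haccel x hx, hTheta x hx] at h
    field_simp [hA0 x hx, hB0 x hx] at h
    have h' := (mul_eq_zero.mp (by linear_combination -h :
      S.B x * S.A x * (9 * S.Sigma x ^ 2 + 3 * (S.rho x + 3 * S.p x)) = 0)).resolve_left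
      (mul_ne_zero (hB0 x hx) (hA0 x hx))
    linear_combination h' / 3
  -- e3 : pdchi p = 0
  have e3 : ∀ x ∈ S.U, pdchi S.p x = 0 := by
    intro x hx
    have h := S.M3 x hx
    simp only [hatd, dotd, zPc x hx, zQt x hx, haccel x hx, hTheta x hx, hQ x hx, hPi x hx] at h
    field_simp [hA0 x hx, hB0 x hx] at h
    exact (mul_eq_zero.mp (by linear_combination h / 6 :
      pdchi S.p x * S.A x = 0)).resolve_right (hA0 x hx)
  -- e4 : pdt rho = 0
  have e4 : ∀ x ∈ S.U, pdt S.rho x = 0 := by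
    intro x hx
    have h := S.M2 x hx
    simp only [hatd, dotd, zQc x hx, haccel x hx, hTheta x hx, hQ x hx, hPi x hx] at h
    field_simp [hA0 x hx, hB0 x hx] at h
    exact (mul_eq_zero.mp (by linear_combination h / 2 :
      S.B x * pdt S.rho x = 0)).resolve_left (hB0 x hx)
  -- e5 : pdt phi
  have e5 : ∀ x ∈ S.U, pdt S.phi x = S.A x * (S.phi x * S.Sigma x / 2) := by
    intro x hx
    have h := S.E2 x hx
    simp only [dotd, haccel x hx, hTheta x hx, hQ x hx] at h
    field_simp [hA0 x hx] at h
    linarith [h]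
  -- e6 : pdt Sigma
  have e6 : ∀ x ∈ S.U, pdt S.Sigma x = S.A x * (-(S.Sigma x * S.Sigma x) / 2 - S.curlyE x) := by
    intro x hx
    have h := S.E1 x hx
    simp only [dotd, zTt x hx, haccel x hx, hTheta x hx, hPi x hx, e2 x hx] at h
    field_simp [hA0 x hx] at h
    linarith [h]
  -- e7 : pdt B
  have e7 : ∀ x ∈ S.U, pdt S.B x = S.A x * S.B x * S.Sigma x := by
    intro x hx
    have h := S.compat2 x hx
    rw [hTheta x hx] at h
    field_simp [hA0 x hx, hB0 x hx] at h
    linarith [h]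
  -- e8 : pdchi rho
  have e8 : ∀ x ∈ S.U, pdchi S.rho x = 9 * (S.B x * (S.phi x * (S.Sigma x * S.Sigma x))) := by
    intro x hx
    have hcg : pdchi S.rho x
        = pdchi (fun y => -3 * (S.Sigma y * S.Sigma y) - 3 * S.p y) x :=
      pdchi_congr_open S.hUopen hx (fun y hy => e2 y hy)
    have dSS : DifferentiableAt ℝ (fun y => S.Sigma y * S.Sigma y) x := (dSig x hx).mul (dSig x hx)
    have h1 : pdchi (fun y => -3 * (S.Sigma y * S.Sigma y) - 3 * S.p y) x
        = -3 * fderiv ℝ (fun y => S.Sigma y * S.Sigma y) x (0,1) - 3 * fderiv ℝ S.p x (0,1) := by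
      show fderiv ℝ (fun y => -3 * (S.Sigma y * S.Sigma y) - 3 * S.p y) x (0,1) = _
      rw [fd_sub (0,1) (dSS.const_mul _) ((diffAt _ S.hp x hx).const_mul _),
        fd_const_mul (0,1) _ dSS, fd_const_mul (0,1) _ (diffAt _ S.hp x hx)]
    have h2 : fderiv ℝ (fun y => S.Sigma y * S.Sigma y) x (0,1)
        = pdchi S.Sigma x * S.Sigma x + S.Sigma x * pdchi S.Sigma x :=
      fd_mul (0,1) (dSig x hx) (dSig x hx)
    rw [hcg, h1, h2, e1 x hx]
    have h3 : fderiv ℝ S.p x (0,1) = pdchi S.p x := rfl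
    rw [h3, e3 x hx]
    ring
  -- e9 : pdchi curlyE
  have e9 : ∀ x ∈ S.U, pdchi S.curlyE x
      = S.B x * (3 * S.phi x * (S.Sigma x * S.Sigma x) - (3/2) * S.phi x * S.curlyE x) := by
    intro x hx
    have h := S.P3 x hx
    simp only [hatd, zPc x hx, hTheta x hx, hQ x hx, hPi x hx, e8 x hx] at h
    field_simp [hB0 x hx] at h
    have hb : (6:ℝ) * S.B x ≠ 0 := mul_ne_zero (by norm_num) (hB0 x hx)
    refine mul_left_cancel₀ hb ?_
    linear_combination (S.B x / 2) * h
  -- e11 : the integrability condition phi*Sigma*(Sigma^2 - 4 E) = 0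
  have e11 : ∀ x ∈ S.U, S.phi x * S.Sigma x * (S.Sigma x * S.Sigma x - 4 * S.curlyE x) = 0 := by
    intro x hx
    have hC2 : ContDiffAt ℝ 2 S.rho x := (S.hrho.contDiffAt (hmem x hx)).of_le (WithTop.coe_le_coe.mpr le_top)
    have h10 : pdt (pdchi S.rho) x = 0 := by
      rw [schwarz hC2]
      exact pdchi_zero_open S.hUopen hx e4
    have h11 : pdt (pdchi S.rho) x
        = pdt (fun y => 9 * (S.B y * (S.phi y * (S.Sigma y * S.Sigma y)))) x :=
      pdt_congr_open S.hUopen hx (fun y hy => e8 y hy)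
    -- expand the product rule
    have dSS : DifferentiableAt ℝ (fun y => S.Sigma y * S.Sigma y) x := (dSig x hx).mul (dSig x hx)
    have dpSS : DifferentiableAt ℝ (fun y => S.phi y * (S.Sigma y * S.Sigma y)) x :=
      (dphi x hx).mul dSS
    have hSS : fderiv ℝ (fun y => S.Sigma y * S.Sigma y) x (1,0)
        = pdt S.Sigma x * S.Sigma x + S.Sigma x * pdt S.Sigma x := fd_mul (1,0) (dSig x hx) (dSig x hx)
    have hpSS : fderiv ℝ (fun y => S.phi y * (S.Sigma y * S.Sigma y)) x (1,0)
        = pdt S.phi x * (S.Sigma x * S.Sigma x)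
          + S.phi x * (pdt S.Sigma x * S.Sigma x + S.Sigma x * pdt S.Sigma x) := by
      rw [fd_mul (1,0) (dphi x hx) dSS, hSS]; simp only [pdt]
    have hBpSS : fderiv ℝ (fun y => S.B y * (S.phi y * (S.Sigma y * S.Sigma y))) x (1,0)
        = pdt S.B x * (S.phi x * (S.Sigma x * S.Sigma x))
          + S.B x * (pdt S.phi x * (S.Sigma x * S.Sigma x)
            + S.phi x * (pdt S.Sigma x * S.Sigma x + S.Sigma x * pdt S.Sigma x)) := by
      rw [fd_mul (1,0) (dB x hx) dpSS, hpSS]; simp only [pdt]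
    have hfull : pdt (fun y => 9 * (S.B y * (S.phi y * (S.Sigma y * S.Sigma y)))) x
        = 9 * (pdt S.B x * (S.phi x * (S.Sigma x * S.Sigma x))
          + S.B x * (pdt S.phi x * (S.Sigma x * S.Sigma x)
            + S.phi x * (pdt S.Sigma x * S.Sigma x + S.Sigma x * pdt S.Sigma x))) := by
      show fderiv ℝ (fun y => 9 * (S.B y * (S.phi y * (S.Sigma y * S.Sigma y)))) x (1,0) = _
      rw [fd_const_mul (f := fun y => S.B y * (S.phi y * (S.Sigma y * S.Sigma y))) (1,0) _ ((dB x hx).mul dpSS), hBpSS]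
    have H : (0:ℝ) = 9 * (S.A x * S.B x * S.Sigma x * (S.phi x * (S.Sigma x * S.Sigma x))
        + S.B x * (S.A x * (S.phi x * S.Sigma x / 2) * (S.Sigma x * S.Sigma x)
          + S.phi x * (S.A x * (-(S.Sigma x * S.Sigma x) / 2 - S.curlyE x) * S.Sigma x
            + S.Sigma x * (S.A x * (-(S.Sigma x * S.Sigma x) / 2 - S.curlyE x))))) := by
      rw [← e5 x hx, ← e6 x hx, ← e7 x hx, ← hfull, ← h11, h10]
    have hAB : S.A x * S.B x ≠ 0 := mul_ne_zero (hA0 x hx) (hB0 x hx)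
    have H2 : S.A x * S.B x * ((9/2)
        * (S.phi x * S.Sigma x * (S.Sigma x * S.Sigma x - 4 * S.curlyE x))) = 0 := by
      linear_combination -H
    have H3 := (mul_eq_zero.mp H2).resolve_left hAB
    linarith
  -- key : phi * Sigma vanishes on U
  have key : ∀ x ∈ S.U, S.phi x * S.Sigma x = 0 := by
    intro x hx
    by_contra hne
    have hcont : ContinuousOn (fun y => S.phi y * S.Sigma y) S.U :=
      (S.hphi.continuousOn).mul (S.hSigma.continuousOn)
    have hVopen : IsOpen (S.U ∩ (fun y => S.phi y * S.Sigma y) ⁻¹' {(0:ℝ)}ᶜ) :=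
      hcont.isOpen_inter_preimage S.hUopen (isOpen_compl_singleton)
    set V := S.U ∩ (fun y => S.phi y * S.Sigma y) ⁻¹' {(0:ℝ)}ᶜ with hV
    have hxV : x ∈ V := ⟨hx, by simpa using hne⟩
    have hEeq : ∀ y ∈ V, S.curlyE y = S.Sigma y * S.Sigma y / 4 := by
      intro y hy
      have h := e11 y hy.1
      have hy2 : S.phi y * S.Sigma y ≠ 0 := by simpa using hy.2
      have := (mul_eq_zero.mp h).resolve_left hy2
      linarith
    have hcg : pdchi S.curlyE x = pdchi (fun y => S.Sigma y * S.Sigma y / 4) x :=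
      pdchi_congr_open hVopen hxV (fun y hy => hEeq y hy)
    have hrhs : pdchi (fun y => S.Sigma y * S.Sigma y / 4) x
        = (pdchi S.Sigma x * S.Sigma x + S.Sigma x * pdchi S.Sigma x) / 4 := by
      have dSS : DifferentiableAt ℝ (fun y => S.Sigma y * S.Sigma y) x := (dSig x hx).mul (dSig x hx)
      have : (fun y => S.Sigma y * S.Sigma y / 4) = fun y => (1/4 : ℝ) * (S.Sigma y * S.Sigma y) := by
        funext y; ring
      show fderiv ℝ (fun y => S.Sigma y * S.Sigma y / 4) x (0,1) = _
      rw [this, fd_const_mul (0,1) _ dSS, fd_mul (0,1) (dSig x hx) (dSig x hx)]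
      simp only [pdchi]
      ring
    have hE : S.curlyE x = S.Sigma x * S.Sigma x / 4 := hEeq x hxV
    have h9 := e9 x hx
    rw [hcg, hrhs, e1 x hx, hE] at h9
    -- h9 now forces phi * Sigma^2 = 0
    have hfin : S.B x * ((27/8) * (S.phi x * S.Sigma x * S.Sigma x)) = 0 := by
      linear_combination -h9
    have := (mul_eq_zero.mp hfin).resolve_left (hB0 x hx)
    have hS : S.phi x * S.Sigma x * S.Sigma x = 0 := by linarith
    have hx2 : S.phi x * S.Sigma x ≠ 0 := by simpa using hxV.2
    have := (mul_eq_zero.mp hS).resolve_left hx2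
    rw [this] at hx2
    simp at hx2
  -- conclusion
  intro x hx
  have h0 := key x hx
  have h8 := e8 x hx
  have hrho0 : pdchi S.rho x = 0 := by
    rw [h8]; linear_combination 9 * S.B x * S.Sigma x * h0
  simp only [hatd]
  rw [hrho0]
  linear_combination (-(9/2 : ℝ)) * S.Sigma x * h0
end

section
/- Suppose Θ = 0, 𝒜 = 0, Q = 0, Π = 0 and φ = 0 identically on U. Then Σ·[Σ² + (1/2)(ℰ + ρ + p)] = 0 at every point of U. -/
lemma fderiv_eq_zero_on {U : Set (ℝ × ℝ)} (hU : IsOpen U) {f : ℝ × ℝ → ℝ}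
    (hf : ∀ x ∈ U, f x = 0) {x : ℝ × ℝ} (hx : x ∈ U) : fderiv ℝ f x = 0 := by
  have h : f =ᶠ[nhds x] (fun _ => (0:ℝ)) :=
    Filter.eventually_of_mem (hU.mem_nhds hx) hf
  rw [h.fderiv_eq, fderiv_fun_const]
  rfl

theorem stmt_9 (S : LRSII)
    (hTheta : ∀ x ∈ S.U, S.Theta x = 0)
    (haccel : ∀ x ∈ S.U, S.accel x = 0)
    (hQ : ∀ x ∈ S.U, S.Q x = 0)
    (hPi : ∀ x ∈ S.U, S.Pi x = 0)
    (hphi : ∀ x ∈ S.U, S.phi x = 0) :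
    ∀ x ∈ S.U, S.Sigma x * (S.Sigma x ^ 2 + (1 / 2) * (S.curlyE x + S.rho x + S.p x)) = 0 := by
  intro x hx
  have hTz := fderiv_eq_zero_on S.hUopen hTheta hx
  have hAz := fderiv_eq_zero_on S.hUopen haccel hx
  have hPz := fderiv_eq_zero_on S.hUopen hphi hx
  have hM1 := S.M1 x hx
  have hP2 := S.P2 x hx
  simp only [hatd, dotd, pdt, pdchi, hTz, hAz, hPz, ContinuousLinearMap.zero_apply,
    mul_zero, hTheta x hx, haccel x hx, hQ x hx, hPi x hx, hphi x hx] at hM1 hP2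
  ring_nf at hM1 hP2
  have : S.Sigma x ^ 2 + (1 / 2) * (S.curlyE x + S.rho x + S.p x) = 0 := by linarith
  rw [this, mul_zero]
end
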